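/- arXiv:1809.07975 — 5 statements merged into one kernel-verified Lean document; each statement's English description precedes it below -/
import Mathlib

section
/- Let X be a real Banach space, n a positive integer, N a monotonous norm on ℝ^n, Y a subset of X, and x_1, …, x_n ∈ X. Let (y_k)_{k≥1} be a sequence in Y such that lim_{k→∞} N(‖x_1 − y_k‖, …, ‖x_n − y_k‖) = inf_{z ∈ Y} N(‖x_1 − z‖, …, ‖x_n − z‖) (an N-simultaneously approximating sequence). If (y_k)_{k≥1} converges weakly to some y_0 ∈ Y, then y_0 is a best N-simultaneous approximation from Y of x_1, …, x_n. -/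
open Filter

/-- If an `N`-simultaneously approximating sequence in `Y` converges weakly
to `y₀ ∈ Y`, then `y₀` is a best `N`-simultaneous approximation from `Y`. -/
theorem weak_limit_of_approximating_seq_is_best_simultaneous_approx
    {X : Type*} [NormedAddCommGroup X] [NormedSpace ℝ X] [CompleteSpace X]
    (n : ℕ) (hn : 0 < n)
    (N : (Fin n → ℝ) → ℝ)
    (hN_eq_zero : ∀ t : Fin n → ℝ, N t = 0 ↔ t = 0)
    (hN_smul : ∀ (a : ℝ) (t : Fin n → ℝ), N (a • t) = |a| * N t)
    (hN_add : ∀ t s : Fin n → ℝ, N (t + s) ≤ N t + N s)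
    (hN_mono : ∀ t s : Fin n → ℝ, (∀ i, |t i| ≤ |s i|) → N t ≤ N s)
    (Y : Set X) (x : Fin n → X)
    (y : ℕ → X) (hyY : ∀ k, y k ∈ Y)
    (happrox : Tendsto (fun k => N (fun i => ‖x i - y k‖)) atTop
      (nhds (⨅ z : Y, N (fun i => ‖x i - (z : X)‖))))
    (y₀ : X) (hy₀ : y₀ ∈ Y)
    (hweak : ∀ φ : X →L[ℝ] ℝ,
      Tendsto (fun k => φ (y k)) atTop (nhds (φ y₀))) :
    ∀ z ∈ Y, N (fun i => ‖x i - y₀‖) ≤ N (fun i => ‖x i - z‖) := by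
  intro z hz
  haveI : Nonempty Y := ⟨⟨y₀, hy₀⟩⟩
  -- basic facts about N
  have hN0 : N 0 = 0 := (hN_eq_zero 0).mpr rfl
  have hNneg : ∀ t, N (-t) = N t := by
    intro t
    have := hN_smul (-1) t
    simpa using this
  have hNnonneg : ∀ t, 0 ≤ N t := by
    intro t
    have h := hN_add t (-t)
    rw [add_neg_cancel, hN0, hNneg] at h
    linarith
  -- the infimum is bounded below, so inf ≤ value at z
  have hbdd : BddBelow (Set.range fun (w : Y) => N (fun i => ‖x i - (w : X)‖)) := by
    refine ⟨0, ?_⟩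
    rintro r ⟨w, rfl⟩
    exact hNnonneg _
  have hinf_le : (⨅ w : Y, N (fun i => ‖x i - (w : X)‖)) ≤ N (fun i => ‖x i - z‖) :=
    ciInf_le hbdd ⟨z, hz⟩
  -- suffices to show N v ≤ inf
  suffices h : N (fun i => ‖x i - y₀‖) ≤ ⨅ w : Y, N (fun i => ‖x i - (w : X)‖) by
    exact h.trans hinf_le
  -- handle trivial space
  rcases subsingleton_or_nontrivial X with hX | hX
  · have : (fun i => ‖x i - y₀‖) = (0 : Fin n → ℝ) := by
      funext i
      simp [Subsingleton.elim (x i - y₀) 0]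
    rw [this, hN0]
    refine le_ciInf fun w => hNnonneg _
  -- Hahn-Banach functionals
  choose φ hφ1 hφ2 using fun i => exists_dual_vector' ℝ (x i - y₀)
  set v : Fin n → ℝ := fun i => ‖x i - y₀‖ with hv
  set a : ℕ → Fin n → ℝ := fun k i => φ i (x i - y k) with ha
  -- coordinatewise convergence of a to v
  have ha_tendsto : ∀ i, Tendsto (fun k => a k i) atTop (nhds (v i)) := by
    intro i
    have h1 := (hweak (φ i)).const_sub (φ i (x i))
    have h2 : φ i (x i) - φ i y₀ = v i := by
      have := hφ2 i
      simp only [map_sub] at this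
      simpa [v] using this
    rw [h2] at h1
    simpa [a, map_sub] using h1
  -- the bound |a k i| ≤ ‖x i - y k‖
  have ha_le : ∀ k i, |a k i| ≤ ‖x i - y k‖ := by
    intro k i
    have h := (φ i).le_opNorm (x i - y k)
    rw [hφ1 i, one_mul] at h
    simpa [a, Real.norm_eq_abs] using h
  -- N (a k) ≤ N (‖x i - y k‖)
  have hNa_le : ∀ k, N (a k) ≤ N (fun i => ‖x i - y k‖) := by
    intro k
    apply hN_mono
    intro i
    rw [abs_of_nonneg (norm_nonneg _)]
    exact ha_le k i
  -- N is subadditive over sums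
  have hsum : ∀ (s : Finset (Fin n)) (f : Fin n → (Fin n → ℝ)),
      N (∑ i ∈ s, f i) ≤ ∑ i ∈ s, N (f i) := by
    intro s f
    induction s using Finset.cons_induction with
    | empty => simp [hN0]
    | cons i s his ih =>
      rw [Finset.sum_cons, Finset.sum_cons]
      exact (hN_add _ _).trans (by linarith)
  have hdecomp : ∀ t : Fin n → ℝ, N t ≤ ∑ i, |t i| * N (Pi.single i 1) := by
    intro t
    have ht : t = ∑ i, t i • (Pi.single i (1:ℝ) : Fin n → ℝ) := by
      funext j
      simp [Pi.single_apply, Finset.sum_apply, mul_comm]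
    calc N t = N (∑ i, t i • (Pi.single i (1:ℝ) : Fin n → ℝ)) := by rw [← ht]
      _ ≤ ∑ i, N (t i • (Pi.single i (1:ℝ) : Fin n → ℝ)) := hsum _ _
      _ = ∑ i, |t i| * N (Pi.single i 1) := by
          refine Finset.sum_congr rfl fun i _ => hN_smul _ _
  -- Lipschitz-type estimate
  have hlip : ∀ t s : Fin n → ℝ, |N t - N s| ≤ N (t - s) := by
    intro t s
    rw [abs_sub_le_iff]
    constructor
    · have := hN_add (t - s) s
      simpa using this
    · have := hN_add (s - t) t
      rw [sub_add_cancel] at this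
      rw [show s - t = -(t - s) by ring, hNneg] at this
      linarith
  -- convergence of N (a k) to N v
  have hNconv : Tendsto (fun k => N (a k)) atTop (nhds (N v)) := by
    rw [tendsto_iff_dist_tendsto_zero]
    have hb : ∀ k, dist (N (a k)) (N v) ≤ ∑ i, |a k i - v i| * N (Pi.single i 1) := by
      intro k
      calc dist (N (a k)) (N v) = |N (a k) - N v| := Real.dist_eq _ _
        _ ≤ N (a k - v) := hlip _ _
        _ ≤ ∑ i, |(a k - v) i| * N (Pi.single i 1) := hdecomp _
        _ = ∑ i, |a k i - v i| * N (Pi.single i 1) := rfl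
    have hsum0 : Tendsto (fun k => ∑ i, |a k i - v i| * N (Pi.single i 1)) atTop (nhds 0) := by
      have : Tendsto (fun k => ∑ i, |a k i - v i| * N (Pi.single i 1)) atTop
          (nhds (∑ i : Fin n, |v i - v i| * N (Pi.single i 1))) := by
        apply tendsto_finset_sum
        intro i _
        exact (((ha_tendsto i).sub_const (v i)).abs).mul_const _
      simpa using this
    exact squeeze_zero (fun k => dist_nonneg) hb hsum0
  -- conclude
  exact le_of_tendsto_of_tendsto' hNconv happrox hNa_le
end

section
/- Let X be a real Banach space, n a positive integer, and N a monotonous norm on ℝ^n. Fix x_1, …, x_n ∈ X. If a sequence (y_k)_{k≥1} in X converges weakly to y_0 ∈ X, then N(‖x_1 − y_0‖, …, ‖x_n − y_0‖) ≤ liminf_{k→∞} N(‖x_1 − y_k‖, …, ‖x_n − y_k‖); that is, the function y ↦ N(‖x_1 − y‖, …, ‖x_n − y‖) is sequentially lower semicontinuous for the weak topology of X. -/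
/-!
A weakly convergent sequence is bounded (uniform boundedness applied in the bidual), so the
liminf is that of a bounded sequence. Norming functionals show that for every `θ < 1`,
eventually `θ ‖xᵢ - y₀‖ ≤ ‖xᵢ - y_k‖` for all `i` at once; monotonicity and homogeneity of `N`
then give `θ N(‖xᵢ - y₀‖)ᵢ ≤ N(‖xᵢ - y_k‖)ᵢ` eventually, and one lets `θ → 1`.
-/

open Filter Set Topology

theorem exists_norm_le_of_bddAbove_dual {𝕜 E ι : Type*} [RCLike 𝕜] [NormedAddCommGroup E]
    [NormedSpace 𝕜 E] {y : ι → E}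
    (h : ∀ φ : StrongDual 𝕜 E, BddAbove (range fun i => ‖φ (y i)‖)) :
    ∃ R, ∀ i, ‖y i‖ ≤ R := by
  obtain ⟨R, hR⟩ := banach_steinhaus (g := fun i => NormedSpace.inclusionInDoubleDual 𝕜 E (y i))
    fun φ => (h φ).imp fun _ hC i => hC (mem_range_self i)
  exact ⟨R, fun i => (NormedSpace.inclusionInDoubleDualLi 𝕜).norm_map (y i) ▸ hR i⟩

theorem eventually_mul_norm_le_norm_of_forall_tendsto {E α : Type*} [NormedAddCommGroup E]
    [NormedSpace ℝ E] {l : Filter α} {z : α → E} {z₀ : E}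
    (h : ∀ φ : StrongDual ℝ E, Tendsto (fun k => φ (z k)) l (𝓝 (φ z₀))) {θ : ℝ} (hθ : θ < 1) :
    ∀ᶠ k in l, θ * ‖z₀‖ ≤ ‖z k‖ := by
  rcases (norm_nonneg z₀).eq_or_lt with hz₀ | hz₀
  · exact Eventually.of_forall fun k => by rw [← hz₀, mul_zero]; exact norm_nonneg _
  obtain ⟨g, hg_norm, hg_z₀⟩ := exists_dual_vector'' ℝ z₀
  have hlt : θ * ‖z₀‖ < g z₀ := by rw [hg_z₀]; simpa using mul_lt_mul_of_pos_right hθ hz₀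
  filter_upwards [(h g).eventually (lt_mem_nhds hlt)] with k hk
  calc θ * ‖z₀‖ ≤ g (z k) := hk.le
    _ ≤ ‖g (z k)‖ := le_abs_self _
    _ ≤ ‖g‖ * ‖z k‖ := g.le_opNorm _
    _ ≤ ‖z k‖ := mul_le_of_le_one_left (norm_nonneg _) hg_norm

theorem le_of_forall_mem_Ioo_mul_le {a b : ℝ} (h : ∀ θ ∈ Ioo (0 : ℝ) 1, θ * a ≤ b) : a ≤ b := by
  have hlim : Tendsto (fun θ : ℝ => θ * a) (𝓝 1) (𝓝 (1 * a)) := tendsto_id.mul_const a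
  rw [one_mul] at hlim
  exact le_of_tendsto (hlim.mono_left nhdsWithin_le_nhds)
    (eventually_of_mem (Ioo_mem_nhdsLT zero_lt_one) h)

theorem le_liminf_of_eventually_mul_le {ι α : Type*} {N : (ι → ℝ) → ℝ}
    (hN_smul : ∀ (a : ℝ) (t : ι → ℝ), N (a • t) = |a| * N t)
    (hN_mono : ∀ t s : ι → ℝ, (∀ i, |t i| ≤ |s i|) → N t ≤ N s)
    {l : Filter α} {a : ι → ℝ} {v : α → ι → ℝ} (ha : 0 ≤ a)
    (hbdd : IsCoboundedUnder (· ≥ ·) l fun k => N (v k))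
    (hev : ∀ θ ∈ Ioo (0 : ℝ) 1, ∀ᶠ k in l, ∀ i, θ * a i ≤ v k i) :
    N a ≤ liminf (fun k => N (v k)) l := by
  refine le_of_forall_mem_Ioo_mul_le fun θ hθ => le_liminf_of_le hbdd ?_
  filter_upwards [hev θ hθ] with k hk
  calc θ * N a = N (θ • a) := by rw [hN_smul, abs_of_pos hθ.1]
    _ ≤ N (v k) := hN_mono _ _ fun i => by
      rw [Pi.smul_apply, smul_eq_mul, abs_of_nonneg (mul_nonneg hθ.1.le (ha i))]
      exact (hk i).trans (le_abs_self _)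

theorem N_norm_function_weakly_sequentially_lsc_general
    {X : Type*} [NormedAddCommGroup X] [NormedSpace ℝ X]
    (n : ℕ)
    (N : (Fin n → ℝ) → ℝ)
    (hN_smul : ∀ (a : ℝ) (t : Fin n → ℝ), N (a • t) = |a| * N t)
    (hN_mono : ∀ t s : Fin n → ℝ, (∀ i, |t i| ≤ |s i|) → N t ≤ N s)
    (x : Fin n → X) (y : ℕ → X) (y₀ : X)
    (hweak : ∀ φ : X →L[ℝ] ℝ,
      Tendsto (fun k => φ (y k)) atTop (nhds (φ y₀))) :
    N (fun i => ‖x i - y₀‖) ≤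
      liminf (fun k => N (fun i => ‖x i - y k‖)) atTop := by
  obtain ⟨R, hR⟩ := exists_norm_le_of_bddAbove_dual fun φ => (hweak φ).norm.bddAbove_range
  have hbdd : IsCoboundedUnder (· ≥ ·) atTop fun k => N (fun i => ‖x i - y k‖) :=
    isCoboundedUnder_ge_of_le atTop fun k => hN_mono _ (fun i => ‖x i‖ + R) fun i => by
      rw [abs_norm]
      exact (norm_sub_le _ _).trans (by linarith [hR k, le_abs_self (‖x i‖ + R)])
  refine le_liminf_of_eventually_mul_le hN_smul hN_mono (fun i => norm_nonneg _) hbdd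
    fun θ hθ => eventually_all.2 fun i => ?_
  refine eventually_mul_norm_le_norm_of_forall_tendsto (fun φ => ?_) hθ.2
  simpa only [map_sub] using (hweak φ).const_sub (φ (x i))

/-- The function `y ↦ N(‖x₁ - y‖, …, ‖xₙ - y‖)` is sequentially lower
semicontinuous for the weak topology of a real Banach space `X`. -/
theorem N_norm_function_weakly_sequentially_lsc
    {X : Type*} [NormedAddCommGroup X] [NormedSpace ℝ X] [CompleteSpace X]
    (n : ℕ) (hn : 0 < n)
    (N : (Fin n → ℝ) → ℝ)
    (hN_eq_zero : ∀ t : Fin n → ℝ, N t = 0 ↔ t = 0)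
    (hN_smul : ∀ (a : ℝ) (t : Fin n → ℝ), N (a • t) = |a| * N t)
    (hN_add : ∀ t s : Fin n → ℝ, N (t + s) ≤ N t + N s)
    (hN_mono : ∀ t s : Fin n → ℝ, (∀ i, |t i| ≤ |s i|) → N t ≤ N s)
    (x : Fin n → X) (y : ℕ → X) (y₀ : X)
    (hweak : ∀ φ : X →L[ℝ] ℝ,
      Tendsto (fun k => φ (y k)) atTop (nhds (φ y₀))) :
    N (fun i => ‖x i - y₀‖) ≤
      liminf (fun k => N (fun i => ‖x i - y k‖)) atTop :=
  N_norm_function_weakly_sequentially_lsc_general n N hN_smul hN_mono x y y₀ hweak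
end

section
/- Let X be a real Banach space, n a positive integer, and N a monotonous norm on ℝ^n. Every weakly compact subset W of X is N-simultaneously proximinal in X; that is, for every x_1, …, x_n ∈ X there exists w_0 ∈ W such that N(‖x_1 − w_0‖, …, ‖x_n − w_0‖) ≤ N(‖x_1 − w‖, …, ‖x_n − w‖) for all w ∈ W. -/
/-!
The objective `w ↦ N (‖x₁ - w‖, …, ‖xₙ - w‖)` is convex, because each `‖xᵢ - w‖` is convex and
`N` is a seminorm that is monotone on the nonnegative orthant; it is norm-continuous, because a
convex function on the finite-dimensional space `ℝⁿ` is continuous. Its sublevel sets are thus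
closed and convex, hence weakly closed (Mazur), so it is weakly lower semicontinuous and attains its
minimum on the weakly compact set `W`.
-/

open Set

section WeakLowerSemicontinuity

variable {E : Type*} [AddCommGroup E] [Module ℝ E] [TopologicalSpace E]
  [IsTopologicalAddGroup E] [ContinuousSMul ℝ E] [LocallyConvexSpace ℝ E]

theorem ConvexOn.lowerSemicontinuous_comp_toWeakSpace_symm {f : E → ℝ}
    (hf_conv : ConvexOn ℝ univ f) (hf : LowerSemicontinuous f) :
    LowerSemicontinuous (f ∘ (toWeakSpace ℝ E).symm) := by
  refine lowerSemicontinuous_iff_isClosed_preimage.2 fun y => ?_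
  have hconv : Convex ℝ (f ⁻¹' Iic y) := by
    simpa [preimage, mem_Iic] using hf_conv.convex_le y
  rw [preimage_comp, ← LinearEquiv.image_eq_preimage_symm,
    ← (hf.isClosed_preimage y).closure_eq, hconv.toWeakSpace_closure ℝ]
  exact isClosed_closure

theorem ConvexOn.exists_isMinOn_of_isCompact_toWeakSpace {f : E → ℝ}
    (hf_conv : ConvexOn ℝ univ f) (hf : LowerSemicontinuous f) {W : Set E}
    (hW_ne : W.Nonempty) (hW : IsCompact (toWeakSpace ℝ E '' W)) :
    ∃ w₀ ∈ W, IsMinOn f W w₀ := by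
  obtain ⟨_, ⟨w₀, hw₀, rfl⟩, hmin⟩ := LowerSemicontinuousOn.exists_isMinOn (hW_ne.image _) hW
    ((hf_conv.lowerSemicontinuous_comp_toWeakSpace_symm hf).lowerSemicontinuousOn _)
  exact ⟨w₀, hw₀, fun w hw => hmin (mem_image_of_mem _ hw)⟩

end WeakLowerSemicontinuity

section DistanceVector

variable {ι E : Type*} [SeminormedAddCommGroup E]

theorem Seminorm.convexOn_comp_norm_sub [NormedSpace ℝ E] (p : Seminorm ℝ (ι → ℝ))
    (hp : MonotoneOn p (Ici 0)) (x : ι → E) : ConvexOn ℝ univ fun w => p fun i => ‖x i - w‖ := by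
  refine ⟨convex_univ, fun w₁ _ w₂ _ a b ha hb hab => ?_⟩
  have hcomp (i : ι) : ‖x i - (a • w₁ + b • w₂)‖ ≤ a * ‖x i - w₁‖ + b * ‖x i - w₂‖ := by
    simpa only [dist_eq_norm', smul_eq_mul] using
      (convexOn_univ_dist (x i)).2 trivial trivial ha hb hab
  calc (p fun i => ‖x i - (a • w₁ + b • w₂)‖)
      ≤ p (a • (fun i => ‖x i - w₁‖) + b • fun i => ‖x i - w₂‖) :=
        hp (fun i => norm_nonneg _)
          (fun i => add_nonneg (mul_nonneg ha (norm_nonneg _)) (mul_nonneg hb (norm_nonneg _)))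
          hcomp
    _ ≤ a • (p fun i => ‖x i - w₁‖) + b • p fun i => ‖x i - w₂‖ :=
        p.convexOn.2 trivial trivial ha hb hab

theorem Seminorm.continuous_comp_norm_sub [Fintype ι] (p : Seminorm ℝ (ι → ℝ)) (x : ι → E) :
    Continuous fun w => p fun i => ‖x i - w‖ :=
  p.convexOn.locallyLipschitz.continuous.comp <| by fun_prop

end DistanceVector

theorem weakly_compact_N_simultaneously_proximinal_general
    {X : Type*} [NormedAddCommGroup X] [NormedSpace ℝ X]
    (n : ℕ)
    (N : (Fin n → ℝ) → ℝ)
    (hN_smul : ∀ (a : ℝ) (t : Fin n → ℝ), N (a • t) = |a| * N t)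
    (hN_add : ∀ t s : Fin n → ℝ, N (t + s) ≤ N t + N s)
    (hN_mono : ∀ t s : Fin n → ℝ, (∀ i, |t i| ≤ |s i|) → N t ≤ N s)
    (W : Set X) (hW_ne : W.Nonempty)
    (hW : IsCompact (toWeakSpace ℝ X '' W))
    (x : Fin n → X) :
    ∃ w₀ ∈ W, ∀ w ∈ W,
      N (fun i => ‖x i - w₀‖) ≤ N (fun i => ‖x i - w‖) := by
  let p : Seminorm ℝ (Fin n → ℝ) := Seminorm.of N hN_add fun a t => hN_smul a t
  have hp : MonotoneOn p (Ici 0) := fun t ht s hs hts =>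
    hN_mono t s fun i => by rw [abs_of_nonneg (ht i), abs_of_nonneg (hs i)]; exact hts i
  exact (p.convexOn_comp_norm_sub hp x).exists_isMinOn_of_isCompact_toWeakSpace
    (p.continuous_comp_norm_sub x).lowerSemicontinuous hW_ne hW

/-- Every (nonempty) weakly compact subset of a real Banach space is
`N`-simultaneously proximinal for any monotonous norm `N` on `ℝ^n`. -/
theorem weakly_compact_N_simultaneously_proximinal
    {X : Type*} [NormedAddCommGroup X] [NormedSpace ℝ X] [CompleteSpace X]
    (n : ℕ) (hn : 0 < n)
    (N : (Fin n → ℝ) → ℝ)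
    (hN_eq_zero : ∀ t : Fin n → ℝ, N t = 0 ↔ t = 0)
    (hN_smul : ∀ (a : ℝ) (t : Fin n → ℝ), N (a • t) = |a| * N t)
    (hN_add : ∀ t s : Fin n → ℝ, N (t + s) ≤ N t + N s)
    (hN_mono : ∀ t s : Fin n → ℝ, (∀ i, |t i| ≤ |s i|) → N t ≤ N s)
    (W : Set X) (hW_ne : W.Nonempty)
    (hW : IsCompact (toWeakSpace ℝ X '' W))
    (x : Fin n → X) :
    ∃ w₀ ∈ W, ∀ w ∈ W,
      N (fun i => ‖x i - w₀‖) ≤ N (fun i => ‖x i - w‖) :=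
  weakly_compact_N_simultaneously_proximinal_general n N hN_smul hN_add hN_mono W hW_ne hW x
end

section
/- Let X be a real Banach space, (Ω, Σ, μ) a complete probability space, and W a weakly compact subset of X. Let (g_m)_{m≥1} be a sequence in L_∞(μ,W) and let g_∞ : Ω → X be such that for almost every s ∈ Ω the sequence (g_m(s))_{m≥1} converges weakly in X to g_∞(s). Then g_∞ ∈ L_∞(μ,W); in particular g_∞ is strongly measurable, essentially bounded, and g_∞(s) ∈ W for almost every s ∈ Ω. -/
/-!
A weakly compact set is weakly closed, and it is norm bounded by the uniform boundedness principle
applied to its image in the bidual; this gives `g_inf s ∈ W` a.e. and the essential bound.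
Measurability is Pettis' theorem: the `g m` take values a.e. in a separable closed subspace, which
is weakly closed, so `g_inf` is a.e. valued in it. On a separable set the norm is a countable
supremum of functionals, so the distances from `g_inf` to a dense sequence are measurable, being
suprema of the measurable maps `φ ∘ g_inf = lim φ ∘ g m`; hence `g_inf` is a.e. a uniform limit of
measurable countably-valued functions.
-/

open MeasureTheory Filter Topology Set TopologicalSpace

section WeakTopology

variable {𝕜 E : Type*} [RCLike 𝕜] [NormedAddCommGroup E] [NormedSpace 𝕜 E]

theorem tendsto_toWeakSpace_iff {ι : Type*} {l : Filter ι} {a : ι → E} {x : E} :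
    Tendsto (fun i => toWeakSpace 𝕜 E (a i)) l (𝓝 (toWeakSpace 𝕜 E x)) ↔
      ∀ φ : StrongDual 𝕜 E, Tendsto (fun i => φ (a i)) l (𝓝 (φ x)) :=
  WeakBilin.tendsto_iff_forall_eval_tendsto _ fun _ _ h =>
    SeparatingDual.eq_iff_forall_dual_eq.2 fun φ => DFunLike.congr_fun h φ

theorem mem_of_tendsto_dual {A : Set E} (hA : IsClosed (toWeakSpace 𝕜 E '' A))
    {ι : Type*} {l : Filter ι} [l.NeBot] {a : ι → E} (ha : ∀ᶠ i in l, a i ∈ A) {x : E}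
    (hx : ∀ φ : StrongDual 𝕜 E, Tendsto (fun i => φ (a i)) l (𝓝 (φ x))) : x ∈ A := by
  obtain ⟨y, hy, hyx⟩ := hA.mem_of_tendsto (tendsto_toWeakSpace_iff.2 hx)
    (ha.mono fun i hi => mem_image_of_mem _ hi)
  rwa [← (toWeakSpace 𝕜 E).injective hyx]

theorem isBounded_of_isCompact_toWeakSpace {W : Set E}
    (hW : IsCompact (toWeakSpace 𝕜 E '' W)) : Bornology.IsBounded W := by
  have hK := hW.image (NormedSpace.inclusionInDoubleDualWeak 𝕜 E).continuous
  have hb := WeakDual.isBounded_iff_isVonNBounded.2 (hK.isVonNBounded (𝕜 := 𝕜))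
  exact ((NormedSpace.inclusionInDoubleDualLi 𝕜 (E := E)).antilipschitz.isBounded_preimage
    hb).subset fun w hw => ⟨_, mem_image_of_mem _ hw, rfl⟩

end WeakTopology

theorem TopologicalSpace.IsSeparable.exists_subset_closure_range {α : Type*} [TopologicalSpace α]
    [Nonempty α] {s : Set α} (hs : IsSeparable s) : ∃ d : ℕ → α, s ⊆ closure (range d) := by
  obtain ⟨c, hc, hsc⟩ := hs
  obtain ⟨d, hd⟩ := (hc.insert (Classical.arbitrary α)).exists_eq_range (insert_nonempty _ _)
  exact ⟨d, hsc.trans (closure_mono (hd ▸ subset_insert _ _))⟩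

theorem TopologicalSpace.IsSeparable.exists_norming_seq {E : Type*} [NormedAddCommGroup E]
    [NormedSpace ℝ E] {S : Set E} (hS : IsSeparable S) :
    ∃ Φ : ℕ → StrongDual ℝ E, ∀ z ∈ S, ‖z‖ = ⨆ k, Φ k z := by
  obtain ⟨d, hd⟩ := hS.exists_subset_closure_range
  choose Φ hΦ_norm hΦ_eq using fun k => exists_dual_vector'' ℝ (d k)
  have hΦ_le : ∀ k x, Φ k x ≤ ‖x‖ := fun k x =>
    (le_abs_self _).trans ((Φ k).le_of_opNorm_le (hΦ_norm k) x |>.trans_eq (one_mul _))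
  refine ⟨Φ, fun z hz => le_antisymm ?_ (ciSup_le fun k => hΦ_le k z)⟩
  refine le_of_forall_pos_le_add fun ε hε => ?_
  obtain ⟨k, hk⟩ := Metric.mem_closure_range_iff.1 (hd hz) (ε / 2) (half_pos hε)
  rw [dist_eq_norm] at hk
  have hbdd : BddAbove (range fun k => Φ k z) := ⟨‖z‖, forall_mem_range.2 fun k => hΦ_le k z⟩
  calc ‖z‖ ≤ ‖d k‖ + ‖z - d k‖ := norm_le_norm_add_norm_sub' z (d k)
    _ = Φ k z + Φ k (d k - z) + ‖z - d k‖ := by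
        rw [map_sub, hΦ_eq, RCLike.ofReal_real_eq_id, id]; ring
    _ ≤ Φ k z + ‖z - d k‖ + ‖z - d k‖ := by
        gcongr; exact (hΦ_le k _).trans_eq (norm_sub_rev _ _)
    _ ≤ (⨆ k, Φ k z) + ε := by linarith [le_ciSup hbdd k]

section Measurability

variable {α : Type*} [MeasurableSpace α] {μ : Measure α}

theorem aemeasurable_of_aemeasurable_dist {β : Type*} [PseudoMetricSpace β] [MeasurableSpace β]
    [BorelSpace β] {f : α → β} (d : ℕ → β) (hf : ∀ᵐ a ∂μ, f a ∈ closure (range d))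
    (hdist : ∀ n, AEMeasurable (fun a => dist (f a) (d n)) μ) : AEMeasurable f μ := by
  classical
  refine aemeasurable_of_unif_approx fun ε hε => ?_
  set h := fun n => (hdist n).mk _
  -- the second disjunct makes `Nat.find` total while keeping each `{a | p a n}` measurable
  let p : α → ℕ → Prop := fun a n => h n a < ε ∨ ∀ k, ε ≤ h k a
  have hp : ∀ a, ∃ n, p a n := fun a => by
    by_cases H : ∃ n, h n a < ε
    · exact H.imp fun n => Or.inl
    · exact ⟨0, Or.inr fun k => not_lt.1 fun hk => H ⟨k, hk⟩⟩
  have hp_meas : ∀ n, MeasurableSet {a | p a n} := fun n => by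
    simp only [p, ofPred_or, ofPred_forall]
    exact (measurableSet_lt (hdist n).measurable_mk measurable_const).union
      (MeasurableSet.iInter fun k => measurableSet_le measurable_const (hdist k).measurable_mk)
  refine ⟨fun a => d (Nat.find (hp a)),
    (measurable_from_nat.comp (measurable_find hp hp_meas)).aemeasurable, ?_⟩
  filter_upwards [hf, ae_all_iff.2 fun n => (hdist n).ae_eq_mk] with a ha hh
  obtain ⟨k, hk⟩ := Metric.mem_closure_range_iff.1 ha ε hε
  rw [dist_comm, hh]
  rcases Nat.find_spec (hp a) with hlt | hge
  · exact hlt.le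
  · rw [hh k] at hk
    exact absurd hk (not_lt.2 (hge k))

variable {E : Type*} [NormedAddCommGroup E] [NormedSpace ℝ E]

theorem aestronglyMeasurable_of_aemeasurable_dual {f : α → E} {t : Set E} (ht : IsSeparable t)
    (hft : ∀ᵐ a ∂μ, f a ∈ t) (hf : ∀ φ : StrongDual ℝ E, AEMeasurable (fun a => φ (f a)) μ) :
    AEStronglyMeasurable f μ := by
  borelize E
  obtain ⟨d, hd⟩ := ht.exists_subset_closure_range
  obtain ⟨Φ, hΦ⟩ :=
    (IsSeparable.iUnion fun n => ht.image (continuous_sub_right (d n))).exists_norming_seq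
  have hdist : ∀ n, AEMeasurable (fun a => dist (f a) (d n)) μ := fun n => by
    refine (AEMeasurable.iSup fun k => (hf (Φ k)).sub_const (Φ k (d n))).congr ?_
    filter_upwards [hft] with a ha
    rw [dist_eq_norm, hΦ _ (mem_iUnion.2 ⟨n, mem_image_of_mem _ ha⟩)]
    simp only [map_sub]
  refine aestronglyMeasurable_iff_aemeasurable_separable.2
    ⟨aemeasurable_of_aemeasurable_dist d ?_ hdist, t, ht, hft⟩
  filter_upwards [hft] with a ha using hd ha

theorem aestronglyMeasurable_of_tendsto_dual_ae {f : ℕ → α → E} {g : α → E}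
    (hf : ∀ n, AEStronglyMeasurable (f n) μ)
    (hlim : ∀ᵐ a ∂μ, ∀ φ : StrongDual ℝ E, Tendsto (fun n => φ (f n a)) atTop (𝓝 (φ (g a)))) :
    AEStronglyMeasurable g μ := by
  choose t ht hft using fun n => (hf n).isSeparable_ae_range
  set V := Submodule.span ℝ (⋃ n, t n)
  have hV_weak : IsClosed (toWeakSpace ℝ E '' closure V) := by
    rw [V.convex.toWeakSpace_closure (𝕜 := ℝ)]
    exact isClosed_closure
  refine aestronglyMeasurable_of_aemeasurable_dual
    ((IsSeparable.iUnion ht).span (R := ℝ)).closure ?_ fun φ => ?_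
  · filter_upwards [hlim, ae_all_iff.2 hft] with a ha hta
    exact mem_of_tendsto_dual hV_weak (Eventually.of_forall fun n =>
      subset_closure (Submodule.subset_span (mem_iUnion.2 ⟨n, hta n⟩))) ha
  · refine aemeasurable_of_tendsto_metrizable_ae' (fun n => ?_) (hlim.mono fun a ha => ha φ)
    exact (φ.continuous.comp_aestronglyMeasurable (hf n)).aemeasurable

end Measurability

theorem ae_weak_limit_mem_Linf_of_weakly_compact_general
    {X : Type*} [NormedAddCommGroup X] [NormedSpace ℝ X]
    {Ω : Type*} [MeasurableSpace Ω] (μ : Measure Ω)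
    (W : Set X) (hW : IsCompact (toWeakSpace ℝ X '' W))
    (g : ℕ → Ω → X)
    (hg : ∀ m, MemLp (g m) ⊤ μ ∧ ∀ᵐ s ∂μ, g m s ∈ W)
    (g_inf : Ω → X)
    (hconv : ∀ᵐ s ∂μ, ∀ φ : X →L[ℝ] ℝ,
      Tendsto (fun m => φ (g m s)) atTop (nhds (φ (g_inf s)))) :
    MemLp g_inf ⊤ μ ∧ ∀ᵐ s ∂μ, g_inf s ∈ W := by
  have hmem : ∀ᵐ s ∂μ, g_inf s ∈ W := by
    filter_upwards [hconv, ae_all_iff.2 fun m => (hg m).2] with s hs hgs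
    exact mem_of_tendsto_dual hW.isClosed (Eventually.of_forall hgs) hs
  have hmeas : AEStronglyMeasurable g_inf μ :=
    aestronglyMeasurable_of_tendsto_dual_ae (fun m => (hg m).1.aestronglyMeasurable) hconv
  obtain ⟨C, hC⟩ := isBounded_iff_forall_norm_le.1 (isBounded_of_isCompact_toWeakSpace hW)
  exact ⟨memLp_top_of_bound hmeas C (hmem.mono fun s hs => hC _ hs), hmem⟩

/-- If a sequence in `L_∞(μ,W)`, with `W` weakly compact, converges weakly
pointwise a.e. to `g_∞`, then `g_∞ ∈ L_∞(μ,W)`. -/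
theorem ae_weak_limit_mem_Linf_of_weakly_compact
    {X : Type*} [NormedAddCommGroup X] [NormedSpace ℝ X] [CompleteSpace X]
    {Ω : Type*} [MeasurableSpace Ω] (μ : Measure Ω)
    [IsProbabilityMeasure μ] [μ.IsComplete]
    (W : Set X) (hW : IsCompact (toWeakSpace ℝ X '' W))
    (g : ℕ → Ω → X)
    (hg : ∀ m, MemLp (g m) ⊤ μ ∧ ∀ᵐ s ∂μ, g m s ∈ W)
    (g_inf : Ω → X)
    (hconv : ∀ᵐ s ∂μ, ∀ φ : X →L[ℝ] ℝ,
      Tendsto (fun m => φ (g m s)) atTop (nhds (φ (g_inf s)))) :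
    MemLp g_inf ⊤ μ ∧ ∀ᵐ s ∂μ, g_inf s ∈ W :=
  ae_weak_limit_mem_Linf_of_weakly_compact_general μ W hW g hg g_inf hconv
end

section
/- Let X be a real Banach space, (Ω, Σ, μ) a complete probability space, and W a weakly compact subset of X. Then L_∞(μ,W) = {g ∈ L_∞(μ,X) : g(s) ∈ W for a.e. s ∈ Ω} is proximinal in L_∞(μ,X): for every f ∈ L_∞(μ,X) there exists g_0 ∈ L_∞(μ,W) with ‖f − g_0‖_∞ ≤ ‖f − h‖_∞ for every h ∈ L_∞(μ,W), i.e. ‖f − g_0‖_∞ = dist(f, L_∞(μ,W)). -/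
open MeasureTheory Filter Set Metric TopologicalSpace

/-!
Replace `f` by a strongly measurable representative `f'`. Near-best approximants from `W` to a
dense sequence of the separable range of `f'` span a separable closed subspace `V`, and
`K = W ∩ V` is weakly compact, separable and exactly as close to every value of `f'` as `W` is.
The norm is weakly lower semicontinuous, so each `f' s` has a nonempty weakly compact set of
nearest points in `K`, and this set-valued map is measurable in the sense that it hits every
weakly closed set on a measurable set. Minimising lexicographically the weakly lower
semicontinuous functions `‖cₙ - ·‖`, for a dense sequence `cₙ` of `K`, selects a nearest point
`g s` for which every `s ↦ ‖g s - cₙ‖` is measurable; hence `g` is strongly measurable. Being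
pointwise a nearest point, `g` is at least as close to `f` as any `h` with values in `W`.
-/

section SetValued

variable {Ω E : Type*} [MeasurableSpace Ω] [TopologicalSpace E]

def UpperMeasurable (F : Ω → Set E) : Prop :=
  ∀ C : Set E, IsClosed C → MeasurableSet {s | (F s ∩ C).Nonempty}

def minimizers (ψ : E → ℝ) (K : Set E) : Set E :=
  K ∩ ψ ⁻¹' Iic (sInf (ψ '' K))

def lexMinimizers (ψ : ℕ → E → ℝ) (K : Set E) : ℕ → Set E
  | 0 => K
  | n + 1 => minimizers (ψ n) (lexMinimizers ψ K n)

variable {ψ : E → ℝ} {K : Set E}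

theorem IsCompact.sInf_image_le_iff (hK : IsCompact K) (hne : K.Nonempty)
    (hψ : LowerSemicontinuous ψ) {a : ℝ} :
    sInf (ψ '' K) ≤ a ↔ (K ∩ ψ ⁻¹' Iic a).Nonempty := by
  obtain ⟨w, hwK, hmin⟩ := (hψ.lowerSemicontinuousOn K).exists_isMinOn hne hK
  have hw : sInf (ψ '' K) = ψ w :=
    IsLeast.csInf_eq ⟨mem_image_of_mem ψ hwK, forall_mem_image.2 (isMinOn_iff.1 hmin)⟩
  rw [hw]
  exact ⟨fun h => ⟨w, hwK, h⟩, fun ⟨v, hvK, hva⟩ => (isMinOn_iff.1 hmin v hvK).trans hva⟩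

theorem IsCompact.minimizers (hK : IsCompact K) (hψ : LowerSemicontinuous ψ) :
    IsCompact (_root_.minimizers ψ K) :=
  hK.inter_right (hψ.isClosed_preimage _)

theorem IsCompact.minimizers_nonempty (hK : IsCompact K) (hne : K.Nonempty)
    (hψ : LowerSemicontinuous ψ) : (_root_.minimizers ψ K).Nonempty :=
  (hK.sInf_image_le_iff hne hψ).1 le_rfl

theorem IsCompact.eq_sInf_image_of_mem_minimizers (hK : IsCompact K)
    (hψ : LowerSemicontinuous ψ) {w : E} (hw : w ∈ _root_.minimizers ψ K) :
    ψ w = sInf (ψ '' K) :=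
  le_antisymm hw.2
    (csInf_le ((hψ.lowerSemicontinuousOn K).bddBelow_of_isCompact hK)
      (mem_image_of_mem ψ hw.1))

theorem IsCompact.lexMinimizers_isCompact_and_nonempty (hK : IsCompact K) (hne : K.Nonempty)
    {ψ : ℕ → E → ℝ} (hψ : ∀ n, LowerSemicontinuous (ψ n)) (n : ℕ) :
    IsCompact (_root_.lexMinimizers ψ K n) ∧ (_root_.lexMinimizers ψ K n).Nonempty := by
  induction n with
  | zero => exact ⟨hK, hne⟩
  | succ n ih => exact ⟨ih.1.minimizers (hψ n), ih.1.minimizers_nonempty ih.2 (hψ n)⟩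

variable {F : Ω → Set E}

theorem UpperMeasurable.measurable_sInf_image (hF : UpperMeasurable F)
    (hK : ∀ s, IsCompact (F s)) (hne : ∀ s, (F s).Nonempty) (hψ : LowerSemicontinuous ψ) :
    Measurable fun s => sInf (ψ '' F s) := by
  refine measurable_of_Iic fun a => ?_
  convert hF _ (hψ.isClosed_preimage a) using 1
  ext s
  exact (hK s).sInf_image_le_iff (hne s) hψ

theorem UpperMeasurable.minimizers (hF : UpperMeasurable F) (hK : ∀ s, IsCompact (F s))
    (hne : ∀ s, (F s).Nonempty) (hψ : LowerSemicontinuous ψ) :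
    UpperMeasurable fun s => _root_.minimizers ψ (F s) := by
  intro C hC
  have key : {s | (_root_.minimizers ψ (F s) ∩ C).Nonempty} =
      ⋂ q : ℚ, {s | sInf (ψ '' F s) < q → (F s ∩ (C ∩ ψ ⁻¹' Iic (q : ℝ))).Nonempty} := by
    ext s
    simp only [mem_ofPred_eq, mem_iInter]
    constructor
    · rintro ⟨w, ⟨hwF, hwψ⟩, hwC⟩ q hq
      exact ⟨w, hwF, hwC, hwψ.trans hq.le⟩
    · intro h
      obtain ⟨q₀, hq₀⟩ := exists_rat_gt (sInf (ψ '' F s))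
      have hFC : (F s ∩ C).Nonempty := (h q₀ hq₀).mono fun w hw => ⟨hw.1, hw.2.1⟩
      obtain ⟨w, ⟨hwF, hwC⟩, hmin⟩ :=
        (hψ.lowerSemicontinuousOn _).exists_isMinOn hFC ((hK s).inter_right hC)
      refine ⟨w, ⟨hwF, show ψ w ≤ _ from le_of_forall_lt_rat_imp_le fun q hq => ?_⟩, hwC⟩
      obtain ⟨v, hvF, hvC, hvq⟩ := h q hq
      exact (isMinOn_iff.1 hmin v ⟨hvF, hvC⟩).trans hvq
  rw [key]
  exact MeasurableSet.iInter fun q =>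
    (measurableSet_lt (hF.measurable_sInf_image hK hne hψ) measurable_const).imp
      (hF _ (hC.inter (hψ.isClosed_preimage _)))

theorem UpperMeasurable.lexMinimizers (hF : UpperMeasurable F) (hK : ∀ s, IsCompact (F s))
    (hne : ∀ s, (F s).Nonempty) {ψ : ℕ → E → ℝ} (hψ : ∀ n, LowerSemicontinuous (ψ n))
    (n : ℕ) : UpperMeasurable fun s => _root_.lexMinimizers ψ (F s) n := by
  induction n with
  | zero => exact hF
  | succ n ih =>
    exact ih.minimizers (fun s => ((hK s).lexMinimizers_isCompact_and_nonempty (hne s) hψ n).1)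
      (fun s => ((hK s).lexMinimizers_isCompact_and_nonempty (hne s) hψ n).2) (hψ n)

theorem UpperMeasurable.exists_selection [T2Space E] (hF : UpperMeasurable F)
    (hK : ∀ s, IsCompact (F s)) (hne : ∀ s, (F s).Nonempty) {ψ : ℕ → E → ℝ}
    (hψ : ∀ n, LowerSemicontinuous (ψ n)) :
    ∃ G : Ω → E, (∀ s, G s ∈ F s) ∧ ∀ n, Measurable fun s => ψ n (G s) := by
  have hlex s n := (hK s).lexMinimizers_isCompact_and_nonempty (hne s) hψ n
  have hG s : (⋂ n, _root_.lexMinimizers ψ (F s) n).Nonempty :=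
    IsCompact.nonempty_iInter_of_sequence_nonempty_isCompact_isClosed _
      (fun _ => inter_subset_left) (fun n => (hlex s n).2) (hK s)
      (fun n => (hlex s n).1.isClosed)
  choose G hG using hG
  refine ⟨G, fun s => mem_iInter.1 (hG s) 0, fun n => ?_⟩
  have hGn : (fun s => ψ n (G s)) = fun s => sInf (ψ n '' _root_.lexMinimizers ψ (F s) n) :=
    funext fun s =>
      (hlex s n).1.eq_sInf_image_of_mem_minimizers (hψ n) (mem_iInter.1 (hG s) (n + 1))
  rw [hGn]
  exact (hF.lexMinimizers hK hne hψ n).measurable_sInf_image (fun s => (hlex s n).1)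
    (fun s => (hlex s n).2) (hψ n)

end SetValued

theorem exists_countable_subset_infDist_eq {α : Type*} [PseudoMetricSpace α] {S W : Set α}
    (hS : IsSeparable S) (hW : W.Nonempty) :
    ∃ C ⊆ W, C.Countable ∧ C.Nonempty ∧ ∀ x ∈ S, infDist x C = infDist x W := by
  obtain ⟨D, hDc, hSD⟩ := hS
  have := hDc.to_subtype
  have hnear (d : D) (m : ℕ) : ∃ w ∈ W, dist (d : α) w < infDist (d : α) W + 1 / (m + 1) :=
    (infDist_lt_iff hW).1 (lt_add_of_pos_right _ Nat.one_div_pos_of_nat)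
  choose w hwW hw using hnear
  obtain ⟨w₀, hw₀⟩ := hW
  set C := insert w₀ (range (Function.uncurry w))
  have hCW : C ⊆ W := insert_subset hw₀ (range_subset_iff.2 fun p => hwW p.1 p.2)
  refine ⟨C, hCW, (countable_range _).insert _, insert_nonempty _ _, fun x hx => ?_⟩
  refine le_antisymm ?_ (infDist_le_infDist_of_subset hCW (insert_nonempty _ _))
  refine show x ∈ {y | infDist y C ≤ infDist y W} from closure_minimal (fun d hd => ?_)
    (isClosed_le (continuous_infDist_pt _) (continuous_infDist_pt _)) (hSD hx)
  refine show infDist d C ≤ infDist d W from le_of_forall_pos_lt_add fun ε hε => ?_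
  obtain ⟨m, hm⟩ := exists_nat_one_div_lt hε
  calc infDist d C ≤ dist d (w ⟨d, hd⟩ m) :=
        infDist_le_dist_of_mem (mem_insert_of_mem _ ⟨(⟨d, hd⟩, m), rfl⟩)
    _ < infDist d W + 1 / (m + 1) := hw ⟨d, hd⟩ m
    _ < infDist d W + ε := by gcongr

theorem stronglyMeasurable_of_measurable_dist {Ω α : Type*} [MeasurableSpace Ω]
    [PseudoMetricSpace α] {g : Ω → α} {c : ℕ → α} (hg : ∀ s, g s ∈ closure (range c))
    (hd : ∀ n, Measurable fun s => dist (g s) (c n)) : StronglyMeasurable g := by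
  borelize α
  refine stronglyMeasurable_iff_measurable_separable.2 ⟨measurable_of_isOpen fun U hU => ?_,
    (countable_range c).isSeparable.closure.mono (range_subset_iff.2 hg)⟩
  have hU' :
      g ⁻¹' U = ⋃ (n : ℕ) (q : ℚ) (_ : ball (c n) q ⊆ U), {s | dist (g s) (c n) < q} := by
    ext s
    simp only [mem_preimage, mem_iUnion, mem_ofPred_eq, exists_prop]
    constructor
    · intro hs
      obtain ⟨ε, hε, hball⟩ := Metric.isOpen_iff.1 hU _ hs
      obtain ⟨_, ⟨n, rfl⟩, hn⟩ := Metric.mem_closure_iff.1 (hg s) (ε / 2) (half_pos hε)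
      obtain ⟨q, hq, hqε⟩ := exists_rat_btwn hn
      refine ⟨n, q, fun y hy => hball ?_, hq⟩
      calc dist y (g s) ≤ dist y (c n) + dist (g s) (c n) := dist_triangle_right _ _ _
        _ < q + q := add_lt_add hy hq
        _ < ε := by linarith
    · rintro ⟨n, q, hU, hq⟩
      exact hU hq
  rw [hU']
  exact .iUnion fun n => .iUnion fun q => .iUnion fun _ =>
    measurableSet_lt (hd n) measurable_const

section WeakTopology

variable {X : Type*} [NormedAddCommGroup X] [NormedSpace ℝ X]

theorem Convex.isClosed_toWeakSpace_image {s : Set X} (hs : Convex ℝ s) (hc : IsClosed s) :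
    IsClosed (toWeakSpace ℝ X '' s) := by
  rw [← closure_eq_iff_isClosed, ← hs.toWeakSpace_closure ℝ, hc.closure_eq]

theorem lowerSemicontinuous_dist_toWeakSpace_symm (x : X) :
    LowerSemicontinuous fun y : WeakSpace ℝ X => dist x ((toWeakSpace ℝ X).symm y) := by
  refine lowerSemicontinuous_iff_isClosed_preimage.2 fun r => ?_
  convert (convex_closedBall x r).isClosed_toWeakSpace_image isClosed_closedBall using 1
  rw [LinearEquiv.image_eq_preimage_symm]
  ext y
  simp [dist_comm]

theorem exists_dist_eq_infDist_of_isCompact_toWeakSpace {A : Set X}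
    (hA : IsCompact (toWeakSpace ℝ X '' A)) (hne : A.Nonempty) (x : X) :
    ∃ w ∈ A, dist x w = infDist x A := by
  obtain ⟨_, ⟨w, hwA, rfl⟩, hmin⟩ :=
    ((lowerSemicontinuous_dist_toWeakSpace_symm x).lowerSemicontinuousOn _).exists_isMinOn
      (hne.image _) hA
  refine ⟨w, hwA, le_antisymm ((le_infDist hne).2 fun v hv => ?_) (infDist_le_dist_of_mem hwA)⟩
  simpa using isMinOn_iff.1 hmin _ (mem_image_of_mem _ hv)

theorem isClosed_setOf_exists_dist_le {A : Set X} (hA : IsCompact (toWeakSpace ℝ X '' A))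
    {r : X → ℝ} (hr : Continuous r) : IsClosed {x | ∃ w ∈ A, dist x w ≤ r x} := by
  rcases A.eq_empty_or_nonempty with rfl | hne
  · simp
  convert isClosed_le (continuous_infDist_pt A) hr using 1
  ext x
  obtain ⟨w, hwA, hw⟩ := exists_dist_eq_infDist_of_isCompact_toWeakSpace hA hne x
  exact ⟨fun ⟨v, hvA, hv⟩ => (infDist_le_dist_of_mem hvA).trans hv,
    fun h => ⟨w, hwA, hw ▸ h⟩⟩

theorem exists_subset_isSeparable_infDist_eq {W S : Set X}
    (hW : IsCompact (toWeakSpace ℝ X '' W)) (hWne : W.Nonempty) (hS : IsSeparable S) :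
    ∃ K ⊆ W, IsCompact (toWeakSpace ℝ X '' K) ∧ K.Nonempty ∧ IsSeparable K ∧
      ∀ x ∈ S, infDist x K = infDist x W := by
  obtain ⟨C, hCW, hCc, hCne, hC⟩ := exists_countable_subset_infDist_eq hS hWne
  set V := (Submodule.span ℝ C).topologicalClosure
  have hCK : C ⊆ W ∩ V :=
    subset_inter hCW (Submodule.subset_span.trans (Submodule.le_topologicalClosure _))
  refine ⟨W ∩ V, inter_subset_left, ?_, hCne.mono hCK, ?_, fun x hx => ?_⟩
  · rw [image_inter (toWeakSpace ℝ X).injective]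
    exact hW.inter_right
      (V.convex.isClosed_toWeakSpace_image (Submodule.span ℝ C).isClosed_topologicalClosure)
  · exact hCc.isSeparable.span.closure.mono
      (inter_subset_right.trans (Submodule.topologicalClosure_coe _).le)
  · refine le_antisymm ?_ (infDist_le_infDist_of_subset inter_subset_left (hCne.mono hCK))
    exact (infDist_le_infDist_of_subset hCK hCne).trans (hC x hx).le

theorem exists_stronglyMeasurable_dist_eq_infDist {Ω : Type*} [MeasurableSpace Ω] {K : Set X}
    (hK : IsCompact (toWeakSpace ℝ X '' K)) (hne : K.Nonempty) (hsep : IsSeparable K)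
    {f : Ω → X} (hf : StronglyMeasurable f) :
    ∃ g : Ω → X, StronglyMeasurable g ∧ ∀ s, g s ∈ K ∧ dist (f s) (g s) = infDist (f s) K := by
  borelize X
  obtain ⟨D, hDc, hKD⟩ := hsep
  obtain ⟨c, rfl⟩ := hDc.exists_eq_range (closure_nonempty_iff.1 (hne.mono hKD))
  set F : Ω → Set (WeakSpace ℝ X) :=
    fun s => toWeakSpace ℝ X '' (K ∩ closedBall (f s) (infDist (f s) K))
  have hFc s : IsCompact (F s) := by
    simp only [F]
    rw [image_inter (toWeakSpace ℝ X).injective]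
    exact hK.inter_right ((convex_closedBall _ _).isClosed_toWeakSpace_image isClosed_closedBall)
  have hFne s : (F s).Nonempty := by
    obtain ⟨w, hwK, hw⟩ := exists_dist_eq_infDist_of_isCompact_toWeakSpace hK hne (f s)
    exact ⟨_, ⟨w, ⟨hwK, mem_closedBall'.2 hw.le⟩, rfl⟩⟩
  have hFm : UpperMeasurable F := by
    intro C hC
    have hFC : {s | (F s ∩ C).Nonempty} =
        f ⁻¹' {x | ∃ w ∈ K ∩ toWeakSpace ℝ X ⁻¹' C, dist x w ≤ infDist x K} := by
      ext s
      simp only [F, mem_ofPred_eq, mem_preimage, ← image_inter_preimage, image_nonempty]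
      exact ⟨fun ⟨w, ⟨hwK, hwB⟩, hwC⟩ => ⟨w, ⟨hwK, hwC⟩, mem_closedBall'.1 hwB⟩,
        fun ⟨w, ⟨hwK, hwC⟩, hw⟩ => ⟨w, ⟨hwK, mem_closedBall'.2 hw⟩, hwC⟩⟩
    rw [hFC]
    refine hf.measurable (isClosed_setOf_exists_dist_le ?_ (continuous_infDist_pt K)).measurableSet
    rw [image_inter_preimage]
    exact hK.inter_right hC
  obtain ⟨G, hGF, hGm⟩ := hFm.exists_selection hFc hFne
    fun n => lowerSemicontinuous_dist_toWeakSpace_symm (c n)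
  have hG s : (toWeakSpace ℝ X).symm (G s) ∈ K ∩ closedBall (f s) (infDist (f s) K) := by
    obtain ⟨w, hw, hwG⟩ := hGF s
    simpa [← hwG] using hw
  refine ⟨fun s => (toWeakSpace ℝ X).symm (G s),
    stronglyMeasurable_of_measurable_dist (fun s => hKD (hG s).1)
      fun n => by simpa only [dist_comm] using hGm n, fun s => ⟨(hG s).1, ?_⟩⟩
  exact le_antisymm (by simpa [dist_comm] using (hG s).2) (infDist_le_dist_of_mem (hG s).1)

end WeakTopology

theorem linf_weakly_compact_proximinal_general
    {X : Type*} [NormedAddCommGroup X] [NormedSpace ℝ X]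
    {Ω : Type*} [MeasurableSpace Ω] (μ : Measure Ω)
    (W : Set X) (hW_ne : W.Nonempty)
    (hW : IsCompact (toWeakSpace ℝ X '' W))
    (f : Ω → X) (hf : MemLp f ⊤ μ) :
    ∃ g₀ : Ω → X, MemLp g₀ ⊤ μ ∧ (∀ᵐ s ∂μ, g₀ s ∈ W) ∧
      ∀ h : Ω → X, MemLp h ⊤ μ → (∀ᵐ s ∂μ, h s ∈ W) →
        (eLpNorm (f - g₀) ⊤ μ).toReal ≤ (eLpNorm (f - h) ⊤ μ).toReal := by
  obtain ⟨f', hf', hff'⟩ := hf.1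
  obtain ⟨K, hKW, hK, hKne, hKsep, hKdist⟩ :=
    exists_subset_isSeparable_infDist_eq hW hW_ne hf'.isSeparable_range
  obtain ⟨g, hg, hgK⟩ := exists_stronglyMeasurable_dist_eq_infDist hK hKne hKsep hf'
  have hnearest (h : Ω → X) (hhW : ∀ᵐ s ∂μ, h s ∈ W) :
      ∀ᵐ s ∂μ, ‖(f - g) s‖ ≤ ‖(f - h) s‖ := by
    filter_upwards [hhW, hff'] with s hs hfs
    simp only [Pi.sub_apply, ← dist_eq_norm, hfs, (hgK s).2, hKdist _ (mem_range_self s)]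
    exact infDist_le_dist_of_mem hs
  obtain ⟨w₀, hw₀⟩ := hKne
  have hfg : MemLp (f - g) ⊤ μ :=
    (hf.sub (memLp_top_const w₀)).of_le (hf.1.sub hg.aestronglyMeasurable)
      (hnearest _ (ae_of_all _ fun _ => hKW hw₀))
  refine ⟨g, by simpa using hf.sub hfg, ae_of_all _ fun s => hKW (hgK s).1, fun h hh hhW => ?_⟩
  exact ENNReal.toReal_mono (hf.sub hh).eLpNorm_ne_top (eLpNorm_mono_ae (hnearest h hhW))

/-- For a weakly compact subset `W` of a real Banach space `X`, the set
`L_∞(μ,W)` is proximinal in `L_∞(μ,X)`. -/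
theorem linf_weakly_compact_proximinal
    {X : Type*} [NormedAddCommGroup X] [NormedSpace ℝ X] [CompleteSpace X]
    {Ω : Type*} [MeasurableSpace Ω] (μ : Measure Ω)
    [IsProbabilityMeasure μ] [μ.IsComplete]
    (W : Set X) (hW_ne : W.Nonempty)
    (hW : IsCompact (toWeakSpace ℝ X '' W))
    (f : Ω → X) (hf : MemLp f ⊤ μ) :
    ∃ g₀ : Ω → X, MemLp g₀ ⊤ μ ∧ (∀ᵐ s ∂μ, g₀ s ∈ W) ∧
      ∀ h : Ω → X, MemLp h ⊤ μ → (∀ᵐ s ∂μ, h s ∈ W) →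
        (eLpNorm (f - g₀) ⊤ μ).toReal ≤ (eLpNorm (f - h) ⊤ μ).toReal :=
  linf_weakly_compact_proximinal_general μ W hW_ne hW f hf
end
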